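/- Let T ∈ U ⊗ V ⊗ W with a blocking D indexed by I × J × K, and let Ψ ⊆ supp_D T be a combinatorial degeneration of supp_D T. Then the tensor Σ_{(i,j,k) ∈ Ψ} T_{(i,j,k)} is a degeneration of T, i.e., it lies in the closure of the GL(U)×GL(V)×GL(W)-orbit of T. (Proof idea: act by diagonal matrices scaling the block U_i by t^{α(i)}, V_j by t^{β(j)}, W_k by t^{γ(k)} and take t → 0.) -/

import Mathlib

/-!
Scale the block `U_i` by `t ^ α i`, `V_j` by `t ^ β j` and `W_k` by `t ^ γ k`. For `t ≠ 0` this is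
an invertible diagonal change of bases, and it multiplies the block `T_{(i,j,k)}` by
`t ^ (α i + β j + γ k)`. On the support this exponent is `0` on `Ψ` and positive off `Ψ`, so as
`t → 0` the blocks in `Ψ` survive unchanged and all others vanish.
-/

open Filter Topology

section TensorOrbit

variable {R a b c : Type*} [CommRing R] [Fintype a] [Fintype b] [Fintype c]
  [DecidableEq a] [DecidableEq b] [DecidableEq c]

def tensorOrbit (T : a × b × c → R) : Set (a × b × c → R) :=
  {S | ∃ g₁ : Matrix a a R, ∃ g₂ : Matrix b b R, ∃ g₃ : Matrix c c R,
    IsUnit g₁.det ∧ IsUnit g₂.det ∧ IsUnit g₃.det ∧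
    S = fun xyz => ∑ x : a, ∑ y : b, ∑ z : c,
      g₁ xyz.1 x * g₂ xyz.2.1 y * g₃ xyz.2.2 z * T (x, y, z)}

theorem isUnit_det_diagonal {d : a → R} (hd : ∀ x, IsUnit (d x)) :
    IsUnit (Matrix.diagonal d).det := by
  rw [Matrix.det_diagonal]
  exact IsUnit.prod_univ_iff.mpr hd

theorem diagonal_scaling_mem_tensorOrbit (T : a × b × c → R) {d₁ : a → R} {d₂ : b → R} {d₃ : c → R}
    (h₁ : ∀ x, IsUnit (d₁ x)) (h₂ : ∀ y, IsUnit (d₂ y)) (h₃ : ∀ z, IsUnit (d₃ z)) :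
    (fun xyz => d₁ xyz.1 * d₂ xyz.2.1 * d₃ xyz.2.2 * T xyz) ∈ tensorOrbit T := by
  refine ⟨Matrix.diagonal d₁, Matrix.diagonal d₂, Matrix.diagonal d₃, isUnit_det_diagonal h₁,
    isUnit_det_diagonal h₂, isUnit_det_diagonal h₃, ?_⟩
  funext xyz
  simp only [Matrix.diagonal_apply, ite_mul, zero_mul, mul_ite, mul_zero,
    Finset.sum_ite_eq, Finset.mem_univ, if_true]

end TensorOrbit

theorem tendsto_zpow_mul_nhdsNE_zero {𝕜 : Type*} [NontriviallyNormedField 𝕜] {e : ℤ} {v : 𝕜}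
    (he : v ≠ 0 → 0 ≤ e) :
    Tendsto (fun t : 𝕜 => t ^ e * v) (𝓝[≠] 0) (𝓝 ((0 : 𝕜) ^ e * v)) := by
  rcases eq_or_ne v 0 with rfl | hv
  · simp only [mul_zero, tendsto_const_nhds]
  · exact ((continuousAt_zpow₀ (0 : 𝕜) e (Or.inr (he hv))).tendsto.mul_const v).mono_left
      nhdsWithin_le_nhds

theorem stmt18_general
    {a b c I J K : Type*}
    [Fintype a] [Fintype b] [Fintype c]
    [DecidableEq a] [DecidableEq b] [DecidableEq c]
    (p : a → I) (q : b → J) (r : c → K)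
    (T : a × b × c → ℂ)
    (Ψ : Set (I × J × K)) [DecidablePred (· ∈ Ψ)]
    (α : I → ℤ) (β : J → ℤ) (γ : K → ℤ)
    (hzero : ∀ ijk ∈ Ψ, α ijk.1 + β ijk.2.1 + γ ijk.2.2 = 0)
    (hpos : ∀ ijk : I × J × K,
      ijk ∈ {ijk : I × J × K | ∃ x y z,
        p x = ijk.1 ∧ q y = ijk.2.1 ∧ r z = ijk.2.2 ∧ T (x, y, z) ≠ 0} →
      ijk ∉ Ψ → 0 < α ijk.1 + β ijk.2.1 + γ ijk.2.2) :
    (fun xyz : a × b × c =>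
        if (p xyz.1, q xyz.2.1, r xyz.2.2) ∈ Ψ then T xyz else 0) ∈
      closure {S : a × b × c → ℂ |
        ∃ g₁ : Matrix a a ℂ, ∃ g₂ : Matrix b b ℂ, ∃ g₃ : Matrix c c ℂ,
          IsUnit g₁.det ∧ IsUnit g₂.det ∧ IsUnit g₃.det ∧
          S = fun xyz => ∑ x : a, ∑ y : b, ∑ z : c,
            g₁ xyz.1 x * g₂ xyz.2.1 y * g₃ xyz.2.2 z * T (x, y, z)} := by
  set e : a × b × c → ℤ := fun xyz => α (p xyz.1) + β (q xyz.2.1) + γ (r xyz.2.2)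
  have he_nonneg : ∀ xyz, T xyz ≠ 0 → 0 ≤ e xyz := fun xyz hT => by
    by_cases hΨ : (p xyz.1, q xyz.2.1, r xyz.2.2) ∈ Ψ
    · exact (hzero _ hΨ).ge
    · exact (hpos _ ⟨xyz.1, xyz.2.1, xyz.2.2, rfl, rfl, rfl, hT⟩ hΨ).le
  have hlimit : (fun xyz => if (p xyz.1, q xyz.2.1, r xyz.2.2) ∈ Ψ then T xyz else 0) =
      fun xyz => (0 : ℂ) ^ e xyz * T xyz := by
    funext xyz
    by_cases hΨ : (p xyz.1, q xyz.2.1, r xyz.2.2) ∈ Ψ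
    · simp [hΨ, e, hzero _ hΨ]
    · rcases eq_or_ne (T xyz) 0 with hT | hT
      · simp [hT]
      · rw [if_neg hΨ, zero_zpow _ (hpos _ ⟨xyz.1, xyz.2.1, xyz.2.2, rfl, rfl, rfl, hT⟩ hΨ).ne',
          zero_mul]
  have hscaled : ∀ t : ℂ, t ≠ 0 → (fun xyz => t ^ e xyz * T xyz) ∈ tensorOrbit T := by
    intro t ht
    simpa only [e, zpow_add₀ ht] using diagonal_scaling_mem_tensorOrbit T
      (d₁ := fun x => t ^ α (p x)) (d₂ := fun y => t ^ β (q y)) (d₃ := fun z => t ^ γ (r z))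
      (fun _ => (zpow_ne_zero _ ht).isUnit) (fun _ => (zpow_ne_zero _ ht).isUnit)
      (fun _ => (zpow_ne_zero _ ht).isUnit)
  rw [hlimit]
  exact mem_closure_of_tendsto
    (tendsto_pi_nhds.mpr fun xyz => tendsto_zpow_mul_nhdsNE_zero (he_nonneg xyz))
    (eventually_mem_nhdsWithin.mono fun t ht => hscaled t ht)

/-- Combinatorial degenerations give tensor degenerations. We work in coordinates:
`T : a × b × c → ℂ` is a tensor written in bases adapted to a blocking, the basis
vectors of the three spaces being labeled by `p : a → I`, `q : b → J`, `r : c → K`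
(so that `U_i` is spanned by the basis vectors `x` with `p x = i`, etc.). The block
`T_{(i,j,k)}` is the restriction of `T` to the indices with labels `(i,j,k)`, and
`supp_D T` is the set of `(i,j,k)` where this block is nonzero. If `Ψ ⊆ supp_D T` is
a combinatorial degeneration (witnessed by `α, β, γ`), then `Σ_{(i,j,k)∈Ψ} T_{(i,j,k)}`
lies in the closure of the `GL(U)×GL(V)×GL(W)`-orbit of `T`. -/
theorem stmt18
    {a b c I J K : Type*}
    [Fintype a] [Fintype b] [Fintype c]
    [DecidableEq a] [DecidableEq b] [DecidableEq c]
    [DecidableEq I] [DecidableEq J] [DecidableEq K]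
    (p : a → I) (q : b → J) (r : c → K)
    (T : a × b × c → ℂ)
    (Ψ : Set (I × J × K)) [DecidablePred (· ∈ Ψ)]
    (hΨsupp : Ψ ⊆ {ijk : I × J × K | ∃ x y z,
      p x = ijk.1 ∧ q y = ijk.2.1 ∧ r z = ijk.2.2 ∧ T (x, y, z) ≠ 0})
    (α : I → ℤ) (β : J → ℤ) (γ : K → ℤ)
    (hzero : ∀ ijk ∈ Ψ, α ijk.1 + β ijk.2.1 + γ ijk.2.2 = 0)
    (hpos : ∀ ijk : I × J × K,
      ijk ∈ {ijk : I × J × K | ∃ x y z,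
        p x = ijk.1 ∧ q y = ijk.2.1 ∧ r z = ijk.2.2 ∧ T (x, y, z) ≠ 0} →
      ijk ∉ Ψ → 0 < α ijk.1 + β ijk.2.1 + γ ijk.2.2) :
    (fun xyz : a × b × c =>
        if (p xyz.1, q xyz.2.1, r xyz.2.2) ∈ Ψ then T xyz else 0) ∈
      closure {S : a × b × c → ℂ |
        ∃ g₁ : Matrix a a ℂ, ∃ g₂ : Matrix b b ℂ, ∃ g₃ : Matrix c c ℂ,
          IsUnit g₁.det ∧ IsUnit g₂.det ∧ IsUnit g₃.det ∧
          S = fun xyz => ∑ x : a, ∑ y : b, ∑ z : c,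
            g₁ xyz.1 x * g₂ xyz.2.1 y * g₃ xyz.2.2 z * T (x, y, z)} :=
  stmt18_general p q r T Ψ α β γ hzero hpos
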